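/- arXiv:2502.03993 — 5 statements merged into one kernel-verified Lean document; each statement's English description precedes it below -/
import Mathlib

section
/- If tuples of positive integers a and b satisfy Landau's criterion sum_i floor(a_i x) - sum_j floor(b_j x) >= 0 for all x >= 0, then the ratio of factorials (a_1)! * ... * (a_r)! / ((b_1)! * ... * (b_s)!) is an integer. -/
/-!
For a prime `p`, Legendre's formula writes the `p`-adic valuation of `∏ (aᵢ)!` as
`∑ₖ ∑ᵢ ⌊aᵢ / pᵏ⌋`. Landau's criterion at `x = 1 / pᵏ` compares these sums term by term, so every
prime occurs in `∏ (bⱼ)!` at most as often as in `∏ (aᵢ)!`.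
-/

open Finset

namespace Nat

theorem factorization_prod_factorial {ι : Type*} (s : Finset ι) (a : ι → ℕ) {p B : ℕ}
    (hp : p.Prime) (hB : ∀ i ∈ s, log p (a i) < B) :
    (∏ i ∈ s, (a i)!).factorization p = ∑ k ∈ Ico 1 B, ∑ i ∈ s, a i / p ^ k := by
  rw [factorization_prod fun i _ => factorial_ne_zero _, Finset.sum_apply', sum_comm]
  exact sum_congr rfl fun i hi => factorization_factorial hp (hB i hi)

theorem log_lt_sum_add_one {ι : Type*} {s : Finset ι} {a : ι → ℕ} {i : ι} (hi : i ∈ s)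
    (p : ℕ) : log p (a i) < ∑ i ∈ s, a i + 1 :=
  lt_succ_of_le ((log_le_self p _).trans (single_le_sum (fun _ _ => Nat.zero_le _) hi))

theorem prod_factorial_dvd_prod_factorial_of_sum_div_le {ι κ : Type*} (s : Finset ι)
    (t : Finset κ) (a : ι → ℕ) (b : κ → ℕ) (h : ∀ d, ∑ j ∈ t, b j / d ≤ ∑ i ∈ s, a i / d) :
    ∏ j ∈ t, (b j)! ∣ ∏ i ∈ s, (a i)! := by
  rw [← factorization_le_iff_dvd (by positivity) (by positivity)]
  intro p
  by_cases hp : p.Prime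
  · set B := ∑ i ∈ s, a i + ∑ j ∈ t, b j + 1
    have hB_a : ∀ i ∈ s, log p (a i) < B := fun i hi => by
      have := log_lt_sum_add_one (a := a) hi p; omega
    have hB_b : ∀ j ∈ t, log p (b j) < B := fun j hj => by
      have := log_lt_sum_add_one (a := b) hj p; omega
    rw [factorization_prod_factorial s a hp hB_a, factorization_prod_factorial t b hp hB_b]
    exact sum_le_sum fun k _ => h (p ^ k)
  · simp [factorization_eq_zero_of_not_prime _ hp]

end Nat

theorem landau_implies_factorial_ratio_integral_general (r s : ℕ) (a : Fin r → ℕ) (b : Fin s → ℕ)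
    (h : ∀ x : ℝ, 0 ≤ x → (∑ j, ⌊(b j : ℝ) * x⌋) ≤ ∑ i, ⌊(a i : ℝ) * x⌋) :
    (∏ j, (b j).factorial) ∣ ∏ i, (a i).factorial := by
  refine Nat.prod_factorial_dvd_prod_factorial_of_sum_div_le _ _ a b fun d => ?_
  have hd := h (d : ℝ)⁻¹ (by positivity)
  simp only [← div_eq_mul_inv, Int.floor_div_natCast, Int.floor_natCast] at hd
  exact_mod_cast hd

theorem landau_implies_factorial_ratio_integral (r s : ℕ) (a : Fin r → ℕ) (b : Fin s → ℕ)
    (ha : ∀ i, 0 < a i) (hb : ∀ j, 0 < b j)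
    (h : ∀ x : ℝ, 0 ≤ x → (∑ j, ⌊(b j : ℝ) * x⌋) ≤ ∑ i, ⌊(a i : ℝ) * x⌋) :
    (∏ j, (b j).factorial) ∣ ∏ i, (a i).factorial :=
  landau_implies_factorial_ratio_integral_general r s a b h
end

section
/- The product of two symmetric unimodal polynomials with nonnegative coefficients is symmetric and unimodal. -/
/-- A polynomial is symmetric (palindromic) if `c i = c (k - i)` where `k` is its degree. -/
def Polynomial.IsSymm (P : Polynomial ℤ) : Prop :=
  ∀ i ≤ P.natDegree, P.coeff i = P.coeff (P.natDegree - i)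

/-- A polynomial is unimodal (in the symmetric sense) if its coefficients increase up to
the middle: `c 0 ≤ c 1 ≤ ⋯ ≤ c ⌊k/2⌋`. -/
def Polynomial.IsUnimodal (P : Polynomial ℤ) : Prop :=
  ∀ i, i + 1 ≤ P.natDegree / 2 → P.coeff i ≤ P.coeff (i + 1)

/-!
Index coefficients by `ℤ`, so that the coefficient sequence `h` of `P * Q` is the convolution
`h k = ∑ᵢ f i * g (k - i)` of the sequences `f`, `g` of `P` and `Q` (of degrees `m`, `n`).
The substitution `i ↦ m - i` gives the symmetry of `h`. For unimodality put
`Δ i = f i - f (i - 1)`, so that `S := h (k + 1) - h k = ∑ᵢ Δ i * g (k + 1 - i)`; since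
`i ↦ m + 1 - i` changes the sign of `Δ`, also `2 S = ∑ᵢ Δ i * (g (k + 1 - i) - g (k - m + i))`.
If `2 k + 1 ≤ m + n`, both factors of each term are `≥ 0` when `2 i ≤ m` and `≤ 0` otherwise,
so `S ≥ 0`.
-/

noncomputable def discreteConv {R : Type*} [Semiring R] (f g : ℤ → R) (k : ℤ) : R :=
  ∑ᶠ i, f i * g (k - i)

/-- Together with `∀ i, f i = f (c - i)`, this says that `f` is unimodal with centre `c / 2`. -/
def IsUnimodalAbout {R : Type*} [LE R] (c : ℤ) (f : ℤ → R) : Prop :=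
  ∀ ⦃t s⦄, t ≤ s → t + s ≤ c → f t ≤ f s

section Convolution

variable {R : Type*} {f g : ℤ → R}

theorem discreteConv_symm [Semiring R] {m n : ℤ} (hf : ∀ i, f i = f (m - i))
    (hg : ∀ i, g i = g (n - i)) (k : ℤ) :
    discreteConv f g (m + n - k) = discreteConv f g k := by
  rw [discreteConv, ← finsum_comp_equiv (Equiv.subLeft m)]
  refine finsum_congr fun i => ?_
  rw [Equiv.subLeft_apply, ← hf, hg (k - i)]
  congr 2
  ring

theorem discreteConv_le_add_one [Ring R] [LinearOrder R] [IsStrictOrderedRing R] {m n k : ℤ}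
    (hfin : f.HasFiniteSupport) (hfs : ∀ i, f i = f (m - i)) (hfu : IsUnimodalAbout m f)
    (hgu : IsUnimodalAbout n g) (hk : 2 * k + 1 ≤ m + n) :
    discreteConv f g k ≤ discreteConv f g (k + 1) := by
  have hfin_pred : (fun i => f (i - 1)).HasFiniteSupport :=
    hfin.fun_comp_of_injective (sub_left_injective (b := 1))
  set S := ∑ᶠ i, (f i - f (i - 1)) * g (k + 1 - i)
  have hshift : discreteConv f g (k + 1) - discreteConv f g k = S := by
    have hreindex : discreteConv f g k = ∑ᶠ i, f (i - 1) * g (k + 1 - i) := by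
      rw [discreteConv, ← finsum_comp_equiv (Equiv.subRight (1 : ℤ))]
      simp only [Equiv.subRight_apply, sub_sub_eq_add_sub]
    rw [hreindex, discreteConv,
      ← finsum_sub_distrib (hfin.fun_mul_left _) (hfin_pred.fun_mul_left _)]
    simp only [S, sub_mul]
  have hreflect : S = ∑ᶠ i, (f (i - 1) - f i) * g (k - m + i) := by
    rw [← finsum_comp_equiv (Equiv.subLeft (m + 1))]
    refine finsum_congr fun i => ?_
    rw [Equiv.subLeft_apply, hfs (m + 1 - i), hfs (m + 1 - i - 1)]
    congr 3 <;> ring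
  have hdouble : S + S = ∑ᶠ i, (f i - f (i - 1)) * (g (k + 1 - i) - g (k - m + i)) := by
    nth_rw 2 [hreflect]
    rw [← finsum_add_distrib ((hfin.fun_sub hfin_pred).fun_mul_left _)
      ((hfin_pred.fun_sub hfin).fun_mul_left _)]
    refine finsum_congr fun i => ?_
    rw [← neg_sub (f i), neg_mul, ← sub_eq_add_neg, mul_sub]
  have hterm (i : ℤ) : 0 ≤ (f i - f (i - 1)) * (g (k + 1 - i) - g (k - m + i)) := by
    rcases le_or_gt (2 * i) m with hi | hi
    · exact mul_nonneg (sub_nonneg.2 (hfu (by omega) (by omega)))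
        (sub_nonneg.2 (hgu (by omega) (by omega)))
    · refine mul_nonneg_of_nonpos_of_nonpos (sub_nonpos.2 ?_)
        (sub_nonpos.2 (hgu (by omega) (by omega)))
      rw [hfs i, hfs (i - 1)]
      exact hfu (by omega) (by omega)
  rw [← sub_nonneg, hshift]
  exact nonneg_add_self_iff.mp (hdouble ▸ finsum_nonneg hterm)

end Convolution

namespace Polynomial

section Semiring

variable {R : Type*} [Semiring R] (p q : R[X])

def coeffInt : ℤ → R
  | (n : ℕ) => p.coeff n
  | Int.negSucc _ => 0

@[simp]
theorem coeffInt_natCast (n : ℕ) : p.coeffInt n = p.coeff n := rfl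

variable {p} in
theorem coeffInt_of_neg {i : ℤ} (hi : i < 0) : p.coeffInt i = 0 := by
  obtain ⟨n, rfl⟩ := Int.eq_negSucc_of_lt_zero hi
  rfl

theorem coeffInt_of_natDegree_lt {i : ℤ} (hi : p.natDegree < i) : p.coeffInt i = 0 := by
  lift i to ℕ using by omega
  exact p.coeff_eq_zero_of_natDegree_lt (by omega)

theorem coeffInt_nonneg [Preorder R] (hp : ∀ n, 0 ≤ p.coeff n) (i : ℤ) : 0 ≤ p.coeffInt i := by
  cases i with
  | ofNat n => exact hp n
  | negSucc _ => exact le_rfl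

theorem support_coeffInt_subset : p.coeffInt.support ⊆ Set.Icc 0 (p.natDegree : ℤ) :=
  fun _ hi => ⟨not_lt.1 (mt coeffInt_of_neg hi), not_lt.1 (mt p.coeffInt_of_natDegree_lt hi)⟩

theorem hasFiniteSupport_coeffInt : p.coeffInt.HasFiniteSupport :=
  (Set.finite_Icc _ _).subset p.support_coeffInt_subset

theorem coeffInt_mul : (p * q).coeffInt = discreteConv p.coeffInt q.coeffInt := by
  funext k
  rcases lt_or_ge k 0 with hk | hk
  · rw [coeffInt_of_neg hk, discreteConv, finsum_eq_zero_of_forall_eq_zero]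
    intro i
    rcases lt_or_ge i 0 with hi | hi
    · rw [coeffInt_of_neg hi, zero_mul]
    · rw [coeffInt_of_neg (by omega : k - i < 0), mul_zero]
  lift k to ℕ using hk
  rw [coeffInt_natCast, coeff_mul, Finset.Nat.sum_antidiagonal_eq_sum_range_succ_mk, discreteConv,
    finsum_eq_sum_of_support_subset _ (s := (Finset.range (k + 1)).image ((↑) : ℕ → ℤ)),
    Finset.sum_image (by simp)]
  · refine Finset.sum_congr rfl fun i hi => ?_
    rw [Finset.mem_range] at hi
    rw [coeffInt_natCast, ← Nat.cast_sub (by omega), coeffInt_natCast]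
  · intro i hi
    have hi₁ := p.support_coeffInt_subset (left_ne_zero_of_mul hi)
    have hi₂ := q.support_coeffInt_subset (right_ne_zero_of_mul hi)
    simp only [Set.mem_Icc] at hi₁ hi₂
    simp only [Finset.coe_image, Finset.coe_range, Set.mem_image, Set.mem_Iio]
    exact ⟨i.toNat, by omega, by omega⟩

end Semiring

variable {p : ℤ[X]}

theorem isSymm_iff_coeffInt :
    p.IsSymm ↔ ∀ i : ℤ, p.coeffInt i = p.coeffInt (p.natDegree - i) := by
  refine ⟨fun hs i => ?_, fun hs i hi => ?_⟩
  · rcases lt_or_ge i 0 with h | h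
    · rw [coeffInt_of_neg h, coeffInt_of_natDegree_lt _ (by omega)]
    rcases le_or_gt i p.natDegree with h' | h'
    · lift i to ℕ using h
      rw [← Nat.cast_sub (by omega), coeffInt_natCast, coeffInt_natCast, hs i (by omega)]
    · rw [coeffInt_of_natDegree_lt _ h', coeffInt_of_neg (by omega)]
  · simpa [← Nat.cast_sub hi] using hs i

theorem IsUnimodal.coeff_mono (hu : p.IsUnimodal) {i j : ℕ} (hij : i ≤ j)
    (hj : 2 * j ≤ p.natDegree) : p.coeff i ≤ p.coeff j := by
  induction j, hij using Nat.le_induction with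
  | base => rfl
  | succ j hij ih => exact (ih (by omega)).trans (hu j (by omega))

theorem IsUnimodal.isUnimodalAbout_coeffInt (hu : p.IsUnimodal) (hs : p.IsSymm)
    (hpos : ∀ n, 0 ≤ p.coeff n) : IsUnimodalAbout p.natDegree p.coeffInt := by
  intro t s hts hsum
  rcases lt_or_ge t 0 with ht | ht
  · rw [coeffInt_of_neg ht]
    exact p.coeffInt_nonneg hpos s
  lift t to ℕ using ht
  rcases le_or_gt (2 * s) p.natDegree with hmid | hmid
  · lift s to ℕ using by omega
    exact hu.coeff_mono (by omega) (by omega)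
  · rw [isSymm_iff_coeffInt.1 hs s]
    lift p.natDegree - s to ℕ using by omega with r hr
    exact hu.coeff_mono (by omega) (by omega)

end Polynomial

theorem mul_symm_unimodal (P Q : Polynomial ℤ) (hP : P ≠ 0) (hQ : Q ≠ 0)
    (hPpos : ∀ i, 0 ≤ P.coeff i) (hQpos : ∀ i, 0 ≤ Q.coeff i)
    (hPs : P.IsSymm) (hQs : Q.IsSymm) (hPu : P.IsUnimodal) (hQu : Q.IsUnimodal) :
    (P * Q).IsSymm ∧ (P * Q).IsUnimodal := by
  have hdeg : ((P * Q).natDegree : ℤ) = P.natDegree + Q.natDegree := by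
    rw [Polynomial.natDegree_mul hP hQ, Nat.cast_add]
  have hPs' := Polynomial.isSymm_iff_coeffInt.1 hPs
  have hQs' := Polynomial.isSymm_iff_coeffInt.1 hQs
  refine ⟨Polynomial.isSymm_iff_coeffInt.2 fun k => ?_, fun k hk => ?_⟩
  · rw [hdeg, Polynomial.coeffInt_mul, discreteConv_symm hPs' hQs']
  · have hstep := discreteConv_le_add_one P.hasFiniteSupport_coeffInt hPs'
      (hPu.isUnimodalAbout_coeffInt hPs hPpos) (hQu.isUnimodalAbout_coeffInt hQs hQpos)
      (k := k) (by omega)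
    rwa [← Polynomial.coeffInt_mul, ← Nat.cast_add_one] at hstep
end

section
/- Let P(q) = sum_{i=0}^{2k} c_i q^i be a polynomial with integer coefficients such that c_i = c_{2k-i} for all i and c_0 = 1. If (1+q) P(q) is symmetric and unimodal, then all coefficients c_i of P are nonnegative. -/
/-! The coefficients of `(1 + q) P` are `c₀` and `cᵢ₊₁ + cᵢ`, so the rise `Qᵢ ≤ Qᵢ₊₁` of the
unimodal `Q = (1 + q) P` in its first half says `0 ≤ c₁` for `i = 0` and `cᵢ₋₁ ≤ cᵢ₊₁` otherwise.
Starting from `c₀ = 1`, this gives `0 ≤ cᵢ` for `i ≤ k`, and the symmetry of `P` covers the rest. -/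

open Polynomial

theorem nonneg_of_nonneg_of_le_add_two {R : Type*} [Preorder R] [Zero R] {a : ℕ → R} {k : ℕ}
    (h0 : 0 ≤ a 0) (h1 : 1 ≤ k → 0 ≤ a 1) (hstep : ∀ i, i + 2 ≤ k → a i ≤ a (i + 2)) :
    ∀ i ≤ k, 0 ≤ a i
  | 0, _ => h0
  | 1, hi => h1 hi
  | i + 2, hi => (nonneg_of_nonneg_of_le_add_two h0 h1 hstep i (by omega)).trans (hstep i hi)

section OneAddXMul

variable {R : Type*} [Semiring R]

theorem coeff_one_add_X_mul_zero (P : R[X]) : ((1 + X) * P).coeff 0 = P.coeff 0 := by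
  simp [add_mul]

theorem coeff_one_add_X_mul_succ (P : R[X]) (n : ℕ) :
    ((1 + X) * P).coeff (n + 1) = P.coeff (n + 1) + P.coeff n := by
  rw [add_mul, one_mul, coeff_add, coeff_X_mul]

theorem coeff_nonneg_of_coeff_one_add_X_mul_le_succ [PartialOrder R] [IsOrderedCancelAddMonoid R]
    {P : R[X]} {k : ℕ} (h0 : 0 ≤ P.coeff 0)
    (hmono : ∀ i, i + 1 ≤ k → ((1 + X) * P).coeff i ≤ ((1 + X) * P).coeff (i + 1)) :
    ∀ i ≤ k, 0 ≤ P.coeff i := by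
  refine nonneg_of_nonneg_of_le_add_two h0 (fun hk => ?_) (fun i hi => ?_)
  · have := hmono 0 hk
    rw [coeff_one_add_X_mul_zero, coeff_one_add_X_mul_succ] at this
    exact le_add_iff_nonneg_left _ |>.mp this
  · have := hmono (i + 1) (by omega)
    rw [coeff_one_add_X_mul_succ, coeff_one_add_X_mul_succ, add_comm (P.coeff (i + 1))] at this
    exact le_of_add_le_add_right this

end OneAddXMul

theorem coeff_sum_range_C_mul_X_pow {R : Type*} [Semiring R] (c : ℕ → R) {n i : ℕ} (hi : i < n) :
    (∑ j ∈ Finset.range n, C (c j) * X ^ j).coeff i = c i := by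
  simp [hi]

open Polynomial in
theorem unimodal_one_add_q_mul_implies_positive_general (k : ℕ) (c : ℕ → ℤ)
    (hc0 : c 0 = 1) (hsym : ∀ i ≤ 2 * k, c i = c (2 * k - i))
    (P : Polynomial ℤ) (hP : P = ∑ i ∈ Finset.range (2 * k + 1), C (c i) * X ^ i)
    (hQuni : ∀ i, i + 1 ≤ k → ((1 + X) * P).coeff i ≤ ((1 + X) * P).coeff (i + 1)) :
    ∀ i ≤ 2 * k, 0 ≤ c i := by
  have hcoeff : ∀ i ≤ 2 * k, P.coeff i = c i := fun i hi =>
    hP ▸ coeff_sum_range_C_mul_X_pow c (by omega)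
  have hP0 : 0 ≤ P.coeff 0 := by rw [hcoeff 0 (by omega), hc0]; exact zero_le_one
  have hlow : ∀ i ≤ k, 0 ≤ c i := fun i hi => by
    rw [← hcoeff i (by omega)]
    exact coeff_nonneg_of_coeff_one_add_X_mul_le_succ hP0 hQuni i hi
  intro i hi
  rcases le_or_gt i k with h | h
  · exact hlow i h
  · exact hsym i hi ▸ hlow (2 * k - i) (by omega)

open Polynomial in
theorem unimodal_one_add_q_mul_implies_positive (k : ℕ) (c : ℕ → ℤ)
    (hc0 : c 0 = 1) (hsym : ∀ i ≤ 2 * k, c i = c (2 * k - i))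
    (P : Polynomial ℤ) (hP : P = ∑ i ∈ Finset.range (2 * k + 1), C (c i) * X ^ i)
    (hQsym : ∀ i ≤ 2 * k + 1, ((1 + X) * P).coeff i = ((1 + X) * P).coeff (2 * k + 1 - i))
    (hQuni : ∀ i, i + 1 ≤ k → ((1 + X) * P).coeff i ≤ ((1 + X) * P).coeff (i + 1)) :
    ∀ i ≤ 2 * k, 0 ≤ c i :=
  unimodal_one_add_q_mul_implies_positive_general k c hc0 hsym P hP hQuni
end

section
/- For all nonnegative integers m >= n, the quantity B(m,n;q) = [2m]![n]! / ([m]![m-n]![2n]!) is a polynomial in q with nonnegative integer coefficients. -/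
/-!
Induction on the recurrence
`B(m, k) = q^(m-k) B(m-1, k-1) + (1 + q^(m+k-1) + q^(m+2k-1) + q^(2m+k-1)) B(m-1, k)`
for `1 ≤ k < m`, whose multipliers have nonnegative coefficients. Cleared of denominators it is a
three-term identity between `q`-integers, checked after multiplying by `q - 1`. The boundary values
are `B(m, m) = 1` and the Gaussian binomial `B(m, 0) = [2m choose m]_q`, which is nonnegative by
the `q`-Pascal rule.
-/

open Polynomial Finset

/-- The `q`-factorial `[n]! = [1][2]⋯[n]` with `[m] = 1 + q + ⋯ + q^{m-1}`, in `ℤ[q]`. -/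
noncomputable def qFact (n : ℕ) : Polynomial ℤ :=
  ∏ i ∈ range n, ∑ j ∈ range (i + 1), X ^ j

section NonnegCoeffs

variable (R : Type*) [Semiring R] [PartialOrder R] [IsOrderedRing R]

def nonnegCoeffs : Subsemiring R[X] where
  carrier := {p | ∀ i, 0 ≤ p.coeff i}
  zero_mem' i := by simp
  one_mem' i := by rw [coeff_one]; split_ifs <;> simp
  add_mem' hp hq i := by rw [coeff_add]; exact add_nonneg (hp i) (hq i)
  mul_mem' hp hq i := by
    rw [coeff_mul]; exact sum_nonneg fun x _ => mul_nonneg (hp _) (hq _)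

variable {R}

theorem mem_nonnegCoeffs {p : R[X]} : p ∈ nonnegCoeffs R ↔ ∀ i, 0 ≤ p.coeff i := Iff.rfl

theorem X_pow_mem_nonnegCoeffs (k : ℕ) : (X : R[X]) ^ k ∈ nonnegCoeffs R :=
  fun i => by rw [coeff_X_pow]; split_ifs <;> simp

end NonnegCoeffs

noncomputable def qInt (k : ℕ) : ℤ[X] :=
  ∑ j ∈ range k, X ^ j

theorem qFact_zero : qFact 0 = 1 := by simp [qFact]

theorem qFact_succ (n : ℕ) : qFact (n + 1) = qFact n * qInt (n + 1) := by
  rw [qFact, qFact, prod_range_succ]; rfl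

theorem qInt_add (a b : ℕ) : qInt (a + b) = qInt a + X ^ a * qInt b := by
  simp only [qInt, sum_range_add, mul_sum, pow_add]

theorem qInt_two_mul (k : ℕ) : qInt (2 * k) = qInt k * (1 + X ^ k) := by
  rw [two_mul, qInt_add]; ring

theorem qInt_mul_X_sub_one (k : ℕ) : qInt k * (X - 1) = X ^ k - 1 :=
  geom_sum_mul X k

theorem exists_mem_nonnegCoeffs_qFact_mul_qFact_mul_eq (a b : ℕ) :
    ∃ P ∈ nonnegCoeffs ℤ, qFact a * qFact b * P = qFact (a + b) := by
  induction a generalizing b with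
  | zero => exact ⟨1, one_mem _, by simp [qFact_zero]⟩
  | succ a iha =>
    induction b with
    | zero => exact ⟨1, one_mem _, by simp [qFact_zero]⟩
    | succ b ihb =>
      obtain ⟨P₁, hP₁, h₁⟩ := iha (b + 1)
      obtain ⟨P₂, hP₂, h₂⟩ := ihb
      refine ⟨P₁ + X ^ (a + 1) * P₂,
        add_mem hP₁ (mul_mem (X_pow_mem_nonnegCoeffs _) hP₂), ?_⟩
      rw [← add_assoc] at h₁
      rw [add_right_comm] at h₂
      calc qFact (a + 1) * qFact (b + 1) * (P₁ + X ^ (a + 1) * P₂)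
          = qInt (a + 1) * (qFact a * qFact (b + 1) * P₁)
            + X ^ (a + 1) * qInt (b + 1) * (qFact (a + 1) * qFact b * P₂) := by
            rw [qFact_succ a, qFact_succ b]; ring
        _ = qFact (a + b + 1) * qInt (a + 1 + (b + 1)) := by
            rw [h₁, h₂, qInt_add (a + 1) (b + 1)]; ring
        _ = qFact (a + 1 + (b + 1)) := by
            rw [show a + 1 + (b + 1) = a + b + 1 + 1 by ring, qFact_succ (a + b + 1)]

/-- `B(n + d, n) = bNum n d / bDen n d`: indexing by `d = m - n` avoids truncated subtraction. -/
noncomputable def bDen (n d : ℕ) : ℤ[X] := qFact (n + d) * qFact d * qFact (2 * n)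

noncomputable def bNum (n d : ℕ) : ℤ[X] := qFact (2 * (n + d)) * qFact n

/-- The multiplier `1 + q^(m+k-1) + q^(m+2k-1) + q^(2m+k-1)` at `m = n + d + 2`, `k = n + 1`. -/
noncomputable def bWeight (n d : ℕ) : ℤ[X] :=
  1 + X ^ (2 * n + d + 2) + X ^ (3 * n + d + 3) + X ^ (3 * n + 2 * d + 4)

theorem bWeight_mem_nonnegCoeffs (n d : ℕ) : bWeight n d ∈ nonnegCoeffs ℤ := by
  refine add_mem (add_mem (add_mem (one_mem _) ?_) ?_) ?_ <;> exact X_pow_mem_nonnegCoeffs _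

/-- The recurrence `B(m, k) = q^(m-k) B(m-1, k-1) + bWeight n d * B(m-1, k)` at `m = n + d + 2`,
`k = n + 1`, divided by the common factor of its three terms. -/
theorem qInt_recurrence (n d : ℕ) :
    X ^ (d + 1) * (1 + X ^ (n + 1)) * qInt (2 * n + 1) + bWeight n d * qInt (d + 1)
      = (1 + X ^ (n + d + 2)) * qInt (2 * n + 2 * d + 3) := by
  apply mul_right_cancel₀ (X_sub_C_ne_zero (1 : ℤ))
  rw [C_1, bWeight]
  linear_combination (X ^ (d + 1) * (1 + X ^ (n + 1))) * qInt_mul_X_sub_one (2 * n + 1)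
    + (1 + X ^ (2 * n + d + 2) + X ^ (3 * n + d + 3) + X ^ (3 * n + 2 * d + 4))
      * qInt_mul_X_sub_one (d + 1)
    - (1 + X ^ (n + d + 2)) * qInt_mul_X_sub_one (2 * n + 2 * d + 3)

theorem bDen_succ_succ_left (n d : ℕ) :
    bDen (n + 1) (d + 1)
      = bDen n (d + 1) * (qInt (n + d + 2) * qInt (2 * n + 1) * qInt (2 * (n + 1))) := by
  rw [bDen, bDen, show n + 1 + (d + 1) = n + d + 1 + 1 by ring,
    show 2 * (n + 1) = 2 * n + 1 + 1 by ring,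
    qFact_succ (n + d + 1), qFact_succ (2 * n + 1), qFact_succ (2 * n)]
  ring_nf

theorem bDen_succ_succ_right (n d : ℕ) :
    bDen (n + 1) (d + 1) = bDen (n + 1) d * (qInt (n + d + 2) * qInt (d + 1)) := by
  rw [bDen, bDen, show n + 1 + (d + 1) = n + 1 + d + 1 by ring, qFact_succ (n + 1 + d),
    qFact_succ d]
  ring_nf

theorem bNum_succ_left (n d : ℕ) : bNum (n + 1) d = bNum n (d + 1) * qInt (n + 1) := by
  rw [bNum, bNum, qFact_succ n, add_right_comm]
  ring_nf

theorem bNum_succ_succ_right (n d : ℕ) :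
    bNum (n + 1) (d + 1)
      = bNum (n + 1) d * (qInt (2 * n + 2 * d + 3) * qInt (2 * (n + d + 2))) := by
  rw [bNum, bNum, show 2 * (n + 1 + (d + 1)) = 2 * (n + 1 + d) + 1 + 1 by ring,
    qFact_succ (2 * (n + 1 + d) + 1), qFact_succ (2 * (n + 1 + d))]
  ring_nf

theorem bDen_mul_eq_bNum_succ_succ {n d : ℕ} {P₁ P₂ : ℤ[X]}
    (h₁ : bDen n (d + 1) * P₁ = bNum n (d + 1))
    (h₂ : bDen (n + 1) d * P₂ = bNum (n + 1) d) :
    bDen (n + 1) (d + 1) * (X ^ (d + 1) * P₁ + bWeight n d * P₂) = bNum (n + 1) (d + 1) := by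
  calc _ = qInt (n + d + 2) * (X ^ (d + 1) * qInt (2 * n + 1) * qInt (2 * (n + 1))
          * (bDen n (d + 1) * P₁) + bWeight n d * qInt (d + 1) * (bDen (n + 1) d * P₂)) := by
        linear_combination (X ^ (d + 1) * P₁) * bDen_succ_succ_left n d
          + (bWeight n d * P₂) * bDen_succ_succ_right n d
    _ = qInt (n + d + 2) * qInt (n + 1) * bNum n (d + 1)
          * (X ^ (d + 1) * (1 + X ^ (n + 1)) * qInt (2 * n + 1)
            + bWeight n d * qInt (d + 1)) := by
        rw [h₁, h₂, bNum_succ_left, qInt_two_mul]; ring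
    _ = bNum (n + 1) (d + 1) := by
        rw [qInt_recurrence, bNum_succ_succ_right, bNum_succ_left, qInt_two_mul (n + d + 2)]; ring

theorem exists_mem_nonnegCoeffs_bDen_mul_eq_bNum (n d : ℕ) :
    ∃ P ∈ nonnegCoeffs ℤ, bDen n d * P = bNum n d := by
  induction n generalizing d with
  | zero =>
    obtain ⟨P, hP, hPeq⟩ := exists_mem_nonnegCoeffs_qFact_mul_qFact_mul_eq d d
    exact ⟨P, hP, by simpa [bDen, bNum, qFact_zero, two_mul] using hPeq⟩
  | succ n ihn =>
    induction d with
    | zero => exact ⟨1, one_mem _, by simp only [bDen, bNum, qFact_zero]; ring⟩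
    | succ d ihd =>
      obtain ⟨P₁, hP₁, h₁⟩ := ihn (d + 1)
      obtain ⟨P₂, hP₂, h₂⟩ := ihd
      exact ⟨_, add_mem (mul_mem (X_pow_mem_nonnegCoeffs _) hP₁)
        (mul_mem (bWeight_mem_nonnegCoeffs n d) hP₂), bDen_mul_eq_bNum_succ_succ h₁ h₂⟩

theorem B_polynomial_nonneg (m n : ℕ) (h : n ≤ m) :
    ∃ P : Polynomial ℤ, (∀ i, 0 ≤ P.coeff i) ∧
      qFact m * qFact (m - n) * qFact (2 * n) * P = qFact (2 * m) * qFact n := by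
  obtain ⟨d, rfl⟩ := Nat.exists_eq_add_of_le h
  obtain ⟨P, hP, hPeq⟩ := exists_mem_nonnegCoeffs_bDen_mul_eq_bNum n d
  exact ⟨P, mem_nonnegCoeffs.mp hP, by rwa [Nat.add_sub_cancel_left]⟩
end

section
/- For all nonnegative integers m, n, the quantity C(m,n;q) = [2m]![2n]! / ([m]![m+n]![n]!) is a polynomial in q with integer coefficients. -/
open Polynomial Finset

/-!
Writing `[k] = ∏_{1 < d ∣ k} Φ_d(q)`, the `q`-factorial `[N]!` is `∏_{d ≥ 2} Φ_d(q)^⌊N/d⌋`.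
So `C(m,n;q)` is a product of cyclotomic polynomials with exponents
`⌊2m/d⌋ + ⌊2n/d⌋ - ⌊m/d⌋ - ⌊(m+n)/d⌋ - ⌊n/d⌋`, which are nonnegative (Landau's inequality).
-/

theorem Nat.filter_dvd_Ico_two_eq_divisors_erase_one {k D : ℕ} (hk : 0 < k) (hkD : k < D) :
    (Ico 2 D).filter (· ∣ k) = k.divisors.erase 1 := by
  ext d
  simp only [mem_filter, mem_Ico, mem_erase, Nat.mem_divisors]
  constructor
  · rintro ⟨⟨hd, -⟩, hdk⟩
    exact ⟨by omega, hdk, hk.ne'⟩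
  · rintro ⟨hd, hdk, -⟩
    have := Nat.pos_of_dvd_of_pos hdk hk
    have := Nat.le_of_dvd hk hdk
    exact ⟨⟨by omega, by omega⟩, hdk⟩

theorem Nat.div_add_add_div_add_div_le (m n d : ℕ) :
    m / d + (m + n) / d + n / d ≤ 2 * m / d + 2 * n / d := by
  rcases Nat.eq_zero_or_pos d with rfl | hd
  · simp
  rw [two_mul, two_mul, Nat.add_div hd, Nat.add_div hd, Nat.add_div hd]
  have := Nat.mod_lt m hd
  have := Nat.mod_lt n hd
  split_ifs <;> omega

theorem qFact_succ_s16 (N : ℕ) : qFact (N + 1) = qFact N * ∑ j ∈ range (N + 1), X ^ j :=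
  prod_range_succ _ N

theorem qFact_eq_prod_cyclotomic {N D : ℕ} (h : N < D) :
    qFact N = ∏ d ∈ Ico 2 D, cyclotomic d ℤ ^ (N / d) := by
  induction N with
  | zero => simp [qFact]
  | succ N ih =>
    have hdivisors := Nat.filter_dvd_Ico_two_eq_divisors_erase_one N.succ_pos h
    simp only [Nat.succ_div, pow_add, prod_mul_distrib, pow_ite, pow_one, pow_zero,
      ← prod_filter, hdivisors]
    rw [qFact_succ_s16, ih (by omega), prod_cyclotomic_eq_geom_sum N.succ_pos]

theorem C_super_catalan_polynomial (m n : ℕ) :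
    ∃ P : Polynomial ℤ,
      qFact m * qFact (m + n) * qFact n * P = qFact (2 * m) * qFact (2 * n) := by
  obtain ⟨P, hP⟩ : qFact m * qFact (m + n) * qFact n ∣ qFact (2 * m) * qFact (2 * n) := by
    have hD : ∀ N ≤ 2 * m + 2 * n, qFact N =
        ∏ d ∈ Ico 2 (2 * m + 2 * n + 1), cyclotomic d ℤ ^ (N / d) :=
      fun N hN => qFact_eq_prod_cyclotomic (by omega)
    simp only [hD m (by omega), hD (m + n) (by omega), hD n (by omega), hD (2 * m) (by omega),
      hD (2 * n) (by omega), ← prod_mul_distrib, ← pow_add]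
    exact prod_dvd_prod_of_dvd _ _ fun d _ =>
      pow_dvd_pow _ (Nat.div_add_add_div_add_div_le m n d)
  exact ⟨P, hP.symm⟩
end
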